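/- arXiv:0704.2904 — 2 statements merged into one kernel-verified Lean document; each statement's English description precedes it below -/
import Mathlib

section
/- Let m, n ≥ 1 and let i_1,…,i_m, j_1,…,j_m ∈ {1,…,n}, with the cyclic conventions i_{m+1} = i_1 and j_{m+1} = j_1. Assume that i_r ≠ i_{r+1} and j_s ≠ j_{s+1} for all 1 ≤ r, s ≤ m. Consider the multiset consisting of the 2m unordered pairs {i_r, i_{r+1}} (1 ≤ r ≤ m) and {j_s, j_{s+1}} (1 ≤ s ≤ m). If (1) every unordered pair occurring in this multiset occurs in it at least twice, and (2) {i_r, i_{r+1}} = {j_s, j_{s+1}} for at least one pair of indices (r, s), then the number of distinct values among i_1,…,i_m, j_1,…,j_m is at most m. -/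
/-!
View the distinct pairs as the edges of a graph on the vertex set `U` of both cycles; `U` is
connected because the cycles share a vertex. The `2m` pairs take each value at least twice, so
there are at most `m` distinct edges, and a connected graph on `#U` vertices has at least
`#U - 1` edges: this gives `#U ≤ m + 1`. One more edge can be dropped: if the shared pair `e₀`
occurs at least three times there are at most `m - 1` distinct pairs, and if it occurs exactly
twice it occurs once in each cycle, so removing `e₀` leaves each cycle a path through all its
vertices and the other at most `m - 1` pairs still connect `U`.
-/

open MeasureTheory ProbabilityTheory Matrix Filter Finset

/-- Cyclic successor on `Fin m`. -/
def finCyc {m : ℕ} (r : Fin m) : Fin m := ⟨(r.val + 1) % m, Nat.mod_lt _ r.pos⟩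

lemma finCyc_eq_add_one {m : ℕ} [NeZero m] (r : Fin m) : finCyc r = r + 1 := by
  ext
  simp only [finCyc, Fin.add_def, Fin.val_one', Nat.add_mod_mod]

open Fin.NatCast Fin.CommRing

namespace SimpleGraph

variable {V : Type*} {G : SimpleGraph V}

lemma card_le_card_edgeSet_add_one_of_connected_induce [Finite G.edgeSet] {U : Finset V}
    (hU : (G.induce (U : Set V)).Connected) : #U ≤ Nat.card G.edgeSet + 1 := by
  have hedges : Nat.card (G.induce (U : Set V)).edgeSet ≤ Nat.card G.edgeSet :=
    Nat.card_le_card_of_injective _ (Embedding.induce (U : Set V)).mapEdgeSet.injective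
  have := hU.card_vert_le_card_edgeSet_add_one
  rw [Nat.card_coe_set_eq, Set.ncard_coe_finset] at this
  omega

lemma card_edgeSet_fromEdgeSet_le (S : Finset (Sym2 V)) :
    Nat.card (fromEdgeSet (S : Set (Sym2 V))).edgeSet ≤ #S := by
  rw [Nat.card_coe_set_eq, edgeSet_fromEdgeSet, ← Set.ncard_coe_finset S]
  exact Set.ncard_le_ncard Set.sdiff_subset S.finite_toSet

lemma reachable_of_adj_add_one_of_ne {m : ℕ} [NeZero m] (f : Fin m → V) (r₀ : Fin m)
    (hf : ∀ r, r ≠ r₀ → G.Adj (f r) (f (r + 1))) (a b : Fin m) :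
    G.Reachable (f a) (f b) := by
  have hbase : ∀ k : ℕ, k < m → G.Reachable (f (r₀ + 1)) (f (r₀ + 1 + (k : Fin m))) := by
    intro k hk
    induction k with
    | zero => simp
    | succ k ih =>
      have hne : r₀ + 1 + (k : Fin m) ≠ r₀ := by
        intro h
        have : ((k + 1 : ℕ) : Fin m) = 0 := by
          push_cast; linear_combination h
        exact absurd (Nat.le_of_dvd k.succ_pos (Fin.natCast_eq_zero.mp this)) (by omega)
      refine (ih (by omega)).trans ?_
      have := (hf _ hne).reachable
      push_cast
      rwa [← add_assoc]
  have hall : ∀ a, G.Reachable (f (r₀ + 1)) (f a) := by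
    intro a
    have := hbase (a - (r₀ + 1)).val (a - (r₀ + 1)).isLt
    rwa [Fin.cast_val_eq_self, add_sub_cancel] at this
  exact (hall a).symm.trans (hall b)

lemma card_image_union_le_card_edgeSet_add_one [DecidableEq V] [Finite G.edgeSet] {m k : ℕ}
    [NeZero m] [NeZero k] {i : Fin m → V} {j : Fin k → V} {r₁ : Fin m} {t₁ : Fin k}
    (hi : ∀ r, r ≠ r₁ → G.Adj (i r) (i (r + 1)))
    (hj : ∀ t, t ≠ t₁ → G.Adj (j t) (j (t + 1)))
    (hij : ∃ r t, i r = j t) :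
    #(image i univ ∪ image j univ) ≤ Nat.card G.edgeSet + 1 := by
  set U := image i univ ∪ image j univ
  let fi : Fin m → (U : Set V) := fun r => ⟨i r, by simp [U]⟩
  let fj : Fin k → (U : Set V) := fun t => ⟨j t, by simp [U]⟩
  have hreach_i := reachable_of_adj_add_one_of_ne (G := G.induce (U : Set V)) fi r₁
    (fun r hr => by simpa [fi] using hi r hr)
  have hreach_j := reachable_of_adj_add_one_of_ne (G := G.induce (U : Set V)) fj t₁
    (fun t ht => by simpa [fj] using hj t ht)
  obtain ⟨r₀, t₀, h₀⟩ := hij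
  refine card_le_card_edgeSet_add_one_of_connected_induce
    ((connected_iff_exists_forall_reachable _).mpr ⟨fi r₀, ?_⟩)
  rintro ⟨x, hx⟩
  rcases mem_union.mp hx with hx | hx
  · obtain ⟨r, -, rfl⟩ := mem_image.mp hx
    exact hreach_i r₀ r
  · obtain ⟨t, -, rfl⟩ := mem_image.mp hx
    exact (Subtype.ext h₀ : fi r₀ = fj t₀) ▸ hreach_j t₀ t

end SimpleGraph

namespace Multiset

variable {β : Type*} [DecidableEq β]

lemma exists_finset_card_lt_of_two_le_count {P : Multiset β} {m : ℕ} (hP : card P = 2 * m)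
    (h : ∀ e ∈ P, 2 ≤ count e P) {e₀ : β} (he₀ : e₀ ∈ P) :
    ∃ S : Finset β, #S < m ∧ ∀ e ∈ P, e ∉ S → e = e₀ ∧ count e₀ P = 2 := by
  have hsum : count e₀ P + ∑ e ∈ P.toFinset.erase e₀, count e P = 2 * m := by
    rw [Finset.add_sum_erase _ (fun e => count e P) (mem_toFinset.mpr he₀),
      toFinset_sum_count_eq, hP]
  have hrest : #(P.toFinset.erase e₀) * 2 ≤ ∑ e ∈ P.toFinset.erase e₀, count e P :=
    Finset.card_nsmul_le_sum _ _ _ fun e he => h e (mem_toFinset.mp (mem_of_mem_erase he))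
  have hcard : #(P.toFinset.erase e₀) + 1 = #P.toFinset :=
    card_erase_add_one (mem_toFinset.mpr he₀)
  by_cases h₂ : count e₀ P = 2
  · refine ⟨P.toFinset.erase e₀, by omega, fun e he heS => ⟨?_, h₂⟩⟩
    by_contra hne
    exact heS (mem_erase.mpr ⟨hne, mem_toFinset.mpr he⟩)
  · have h₃ : 3 ≤ count e₀ P := by have := h e₀ he₀; omega
    exact ⟨P.toFinset, by omega, fun e he heS => absurd (mem_toFinset.mpr he) heS⟩

lemma two_le_count_map_univ {ι : Type*} [Fintype ι] (f : ι → β) {r r' : ι} (hr : r ≠ r')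
    (h : f r = f r') : 2 ≤ count (f r) (map f univ.val) := by
  classical
  rw [count_map, ← Finset.filter_val, ← Finset.card_def]
  have : ({r, r'} : Finset ι) ⊆ univ.filter (fun a => f r = f a) := by
    intro a ha
    rcases Finset.mem_insert.mp ha with rfl | ha
    · simp
    · rw [Finset.mem_singleton.mp ha]; simp [h]
  simpa [Finset.card_pair hr] using Finset.card_le_card this

lemma apply_mem_of_ne_of_count_eq_two {ι : Type*} [Fintype ι] {f : ι → β} {B : Multiset β}
    {S : Finset β} {r₁ r : ι}
    (hS : ∀ e ∈ map f univ.val + B, e ∉ S →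
      e = f r₁ ∧ count (f r₁) (map f univ.val + B) = 2)
    (hB : f r₁ ∈ B) (hr : r ≠ r₁) : f r ∈ S := by
  by_contra hrS
  obtain ⟨he, hcount⟩ := hS _ (mem_add.mpr (Or.inl (mem_map_of_mem _ (mem_univ_val r)))) hrS
  have hA := two_le_count_map_univ f hr he
  have hB := one_le_count_iff_mem.mpr hB
  rw [count_add, ← he] at hcount
  rw [← he] at hB
  omega

end Multiset

theorem statement13_general (m n : ℕ) (hm : 1 ≤ m)
    (i j : Fin m → Fin n)
    (hi : ∀ r, i r ≠ i (finCyc r)) (hj : ∀ s, j s ≠ j (finCyc s))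
    (Pm : Multiset (Sym2 (Fin n)))
    (hPm : Pm = Multiset.map (fun r => s(i r, i (finCyc r))) Finset.univ.val +
      Multiset.map (fun t => s(j t, j (finCyc t))) Finset.univ.val)
    (h1 : ∀ e ∈ Pm, 2 ≤ Pm.count e)
    (h2 : ∃ r t, s(i r, i (finCyc r)) = s(j t, j (finCyc t))) :
    (Finset.image i Finset.univ ∪ Finset.image j Finset.univ).card ≤ m := by
  have : NeZero m := ⟨by omega⟩
  simp only [finCyc_eq_add_one] at hi hj hPm h2
  obtain ⟨r₁, t₁, he₀⟩ := h2
  set A := Multiset.map (fun r => s(i r, i (r + 1))) Finset.univ.val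
  set B := Multiset.map (fun t => s(j t, j (t + 1))) Finset.univ.val
  have he₀A : s(i r₁, i (r₁ + 1)) ∈ A := Multiset.mem_map_of_mem _ (mem_univ_val r₁)
  have he₀B : s(i r₁, i (r₁ + 1)) ∈ B :=
    he₀ ▸ Multiset.mem_map_of_mem _ (mem_univ_val t₁)
  obtain ⟨S, hSm, hS⟩ := Multiset.exists_finset_card_lt_of_two_le_count (m := m)
    (by simp only [hPm, A, B, Multiset.card_add, Multiset.card_map, card_val, card_univ,
      Fintype.card_fin, two_mul]) h1 (hPm ▸ Multiset.mem_add.mpr (Or.inl he₀A))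
  rw [hPm] at hS
  have hSi : ∀ r, r ≠ r₁ → s(i r, i (r + 1)) ∈ S := fun r hr =>
    Multiset.apply_mem_of_ne_of_count_eq_two (f := fun r => s(i r, i (r + 1))) hS he₀B hr
  rw [add_comm A, he₀] at hS
  have hSj : ∀ t, t ≠ t₁ → s(j t, j (t + 1)) ∈ S := fun t ht =>
    Multiset.apply_mem_of_ne_of_count_eq_two (f := fun t => s(j t, j (t + 1))) hS
      (he₀ ▸ he₀A) ht
  have hshared : ∃ r t, i r = j t := by
    rcases Sym2.eq_iff.mp he₀ with ⟨h, -⟩ | ⟨h, -⟩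
    exacts [⟨r₁, t₁, h⟩, ⟨r₁, t₁ + 1, h⟩]
  open SimpleGraph in
  calc _ ≤ Nat.card (fromEdgeSet (S : Set (Sym2 (Fin n)))).edgeSet + 1 :=
        card_image_union_le_card_edgeSet_add_one
          (fun r hr => (fromEdgeSet_adj _).mpr ⟨hSi r hr, hi r⟩)
          (fun t ht => (fromEdgeSet_adj _).mpr ⟨hSj t ht, hj t⟩) hshared
    _ ≤ #S + 1 := by grw [card_edgeSet_fromEdgeSet_le]
    _ ≤ m := hSm

/-- If each cyclically consecutive pair `{i_r, i_{r+1}}`, `{j_s, j_{s+1}}` occurs at least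
twice in the combined multiset of such pairs, and some `i`-pair coincides with some
`j`-pair, then the number of distinct values among `i_1,…,i_m, j_1,…,j_m` is at most `m`. -/
theorem statement13 (m n : ℕ) (hm : 1 ≤ m) (hn : 1 ≤ n)
    (i j : Fin m → Fin n)
    (hi : ∀ r, i r ≠ i (finCyc r)) (hj : ∀ s, j s ≠ j (finCyc s))
    (Pm : Multiset (Sym2 (Fin n)))
    (hPm : Pm = Multiset.map (fun r => s(i r, i (finCyc r))) Finset.univ.val +
      Multiset.map (fun t => s(j t, j (finCyc t))) Finset.univ.val)
    (h1 : ∀ e ∈ Pm, 2 ≤ Pm.count e)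
    (h2 : ∃ r t, s(i r, i (finCyc r)) = s(j t, j (finCyc t))) :
    (Finset.image i Finset.univ ∪ Finset.image j Finset.univ).card ≤ m :=
  statement13_general m n hm i j hi hj Pm hPm h1 h2
end

section
/- Let {A_n} be a sequence of Wigner(n,1) matrices with E|X_{12}|⁴ < ∞ and E[X_{11}²] < ∞, let c > 0 be such that σ(c) > 0, and let Ã_n be the truncation of A_n at level c. Then almost surely limsup_{n→∞} ‖A_n − Ã_n‖₂ ≤ √(Var(X_{12}·𝟙_{|X_{12}|>c})) + |1 − σ(c)| ≤ √(1 − σ²(c)) + |1 − σ(c)|. -/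
open MeasureTheory ProbabilityTheory Matrix Filter Finset

/-- A family (indexed by `L`) of mutually independent infinite entry arrays of
`Wigner(n,1)` matrices: the array is Hermitian (`X_{ji} = conj X_{ij}`), the upper-triangular
entries (diagonal included) form a mutually independent family across the whole family of
arrays, the strictly-upper entries of each array are identically distributed with mean `0`
and variance `1`, and the diagonal entries of each array are identically distributed and
real-valued. -/
structure IsWignerEntries {Ω : Type*} [MeasurableSpace Ω] (P : MeasureTheory.Measure Ω)
    {L : Type*} (X : L → ℕ → ℕ → Ω → ℂ) : Prop where
  meas : ∀ l i j, Measurable (X l i j)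
  herm : ∀ l i j ω, X l j i ω = starRingEnd ℂ (X l i j ω)
  indep : ProbabilityTheory.iIndepFun
    (fun q : L × {q : ℕ × ℕ // q.1 ≤ q.2} => X q.1 q.2.1.1 q.2.1.2) P
  offdiag_distrib : ∀ l i j, i < j → P.map (X l i j) = P.map (X l 0 1)
  diag_distrib : ∀ l i, P.map (X l i i) = P.map (X l 0 0)
  diag_real : ∀ l i ω, (X l i i ω).im = 0
  mean_zero : ∀ l, ∫ ω, X l 0 1 ω ∂P = 0
  var_one : ∀ l, ∫ ω, ‖X l 0 1 ω‖ ^ 2 ∂P = 1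

/-- The `n × n` Wigner matrix built from the entry array: `A_n = (1/√n)(X_{ij})_{i,j<n}`. -/
noncomputable def wignerMat {Ω : Type*} {L : Type*} (X : L → ℕ → ℕ → Ω → ℂ) (l : L)
    (n : ℕ) (ω : Ω) : Matrix (Fin n) (Fin n) ℂ :=
  Matrix.of fun i j => (Real.sqrt n : ℂ)⁻¹ * X l i.val j.val ω
/-- The "variance" `E‖Y − EY‖²` of a complex random variable. -/
noncomputable def cVar {Ω : Type*} [MeasurableSpace Ω] (P : MeasureTheory.Measure Ω)
    (Y : Ω → ℂ) : ℝ :=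
  ∫ ω, ‖Y ω - ∫ ω', Y ω' ∂P‖ ^ 2 ∂P

/-- `z·𝟙_{‖z‖ ≤ c}`. -/
noncomputable def truncBelow (c : ℝ) (z : ℂ) : ℂ := if ‖z‖ ≤ c then z else 0

/-- `z·𝟙_{‖z‖ > c}`. -/
noncomputable def truncAbove (c : ℝ) (z : ℂ) : ℂ := if ‖z‖ ≤ c then 0 else z

/-- `σ²(c) = Var(X₁₂·𝟙_{|X₁₂| ≤ c})` for the entry array `X`. -/
noncomputable def sigma2 {Ω : Type*} [MeasurableSpace Ω] (P : MeasureTheory.Measure Ω)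
    (Y : Ω → ℂ) (c : ℝ) : ℝ :=
  cVar P (fun ω => truncBelow c (Y ω))

/-- The truncation at level `c` of the Wigner matrix with entry array `X`: zero diagonal and
off-diagonal entries `(X_{ij}·𝟙_{|X_{ij}|≤c} − E[X_{ij}·𝟙_{|X_{ij}|≤c}])/σ(c)`, scaled
by `1/√n`. -/
noncomputable def truncMat {Ω : Type*} [MeasurableSpace Ω] (P : MeasureTheory.Measure Ω)
    (X : ℕ → ℕ → Ω → ℂ) (c : ℝ) (n : ℕ) (ω : Ω) : Matrix (Fin n) (Fin n) ℂ :=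
  Matrix.of fun i j =>
    if i = j then 0
    else (Real.sqrt n : ℂ)⁻¹ * (Real.sqrt (sigma2 P (X 0 1) c) : ℂ)⁻¹ *
      (truncBelow c (X i.val j.val ω) - ∫ ω', truncBelow c (X i.val j.val ω') ∂P)
/-- The normalized Schatten 2-norm `‖M‖₂ = (tr_n(MᴴM))^{1/2} = ((1/n)∑_{i,j}‖M_{ij}‖²)^{1/2}`. -/
noncomputable def schatten2 {n : ℕ} (M : Matrix (Fin n) (Fin n) ℂ) : ℝ :=
  Real.sqrt ((n : ℝ)⁻¹ * ∑ i : Fin n, ∑ j : Fin n, ‖M i j‖ ^ 2)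

/-!
Let `V_n` be `1/√n` times the Hermitian array with zero diagonal and centred entries
`X_{ij}𝟙_{|X_{ij}|≤c} − E[X_{ij}𝟙_{|X_{ij}|≤c}]`, so that `Ã_n = σ(c)⁻¹ V_n` and
`A_n − Ã_n = R_n + (1 − σ(c)⁻¹) V_n` with `R_n = A_n − V_n`. With `m = E[X₁₂𝟙_{|X₁₂|≤c}]`, the
entries of `√n V_n` and `√n R_n` above the diagonal are `X_{ij}𝟙_{|X_{ij}|≤c} − m` and
`X_{ij}𝟙_{|X_{ij}|>c} + m`, and on the diagonal `0` and `X_{ii}`. By Hermitian symmetry,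
`‖R_n‖₂²` and `‖V_n‖₂²` are `n⁻²` times a diagonal sum plus twice a sum of i.i.d. variables over
the pairs `i < j`. Enumerating these pairs so that the first `n(n−1)/2` are those with `j < n`,
the strong law of large numbers makes the off-diagonal parts converge almost surely to
`Var(X₁₂𝟙_{|X₁₂|>c})` and `σ²(c)`, while `n⁻² ∑ |X_{ii}|² → 0`; the triangle inequality for
`‖·‖₂` gives the first bound. For the second, the two truncations of `X₁₂` have disjoint supports
and, as `E X₁₂ = 0`, opposite means, so `Var(X₁₂𝟙_{|X₁₂|>c}) + σ²(c) = E|X₁₂|² − 2|m|² ≤ 1`.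
-/

open Topology

section Truncation

variable (c : ℝ) (z : ℂ)

lemma truncBelow_add_truncAbove : truncBelow c z + truncAbove c z = z := by
  unfold truncBelow truncAbove; split_ifs <;> simp

lemma norm_truncBelow_sq_add_norm_truncAbove_sq :
    ‖truncBelow c z‖ ^ 2 + ‖truncAbove c z‖ ^ 2 = ‖z‖ ^ 2 := by
  unfold truncBelow truncAbove; split_ifs <;> simp

lemma truncBelow_conj : truncBelow c (starRingEnd ℂ z) = starRingEnd ℂ (truncBelow c z) := by
  unfold truncBelow; rw [RCLike.norm_conj]; split_ifs <;> simp

lemma norm_truncBelow_le : ‖truncBelow c z‖ ≤ |c| := by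
  unfold truncBelow; split_ifs with h
  · exact h.trans (le_abs_self c)
  · simp

lemma norm_truncAbove_le : ‖truncAbove c z‖ ≤ ‖z‖ := by
  unfold truncAbove; split_ifs <;> simp

@[fun_prop]
lemma measurable_truncBelow : Measurable (truncBelow c) :=
  Measurable.ite (measurableSet_le measurable_norm measurable_const) measurable_id
    measurable_const

@[fun_prop]
lemma measurable_truncAbove : Measurable (truncAbove c) :=
  Measurable.ite (measurableSet_le measurable_norm measurable_const) measurable_const
    measurable_id

end Truncation

section Variance

variable {Ω : Type*} [MeasurableSpace Ω] {P : Measure Ω}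

lemma MeasureTheory.MemLp.truncAbove_comp {Y : Ω → ℂ} {p : ENNReal} (hY : MemLp Y p P) (c : ℝ) :
    MemLp (fun ω => truncAbove c (Y ω)) p P :=
  hY.of_le ((measurable_truncAbove c).comp_aemeasurable hY.1.aemeasurable).aestronglyMeasurable
    (Eventually.of_forall fun ω => by simpa using norm_truncAbove_le c (Y ω))

variable [IsProbabilityMeasure P]

lemma memLp_truncBelow_comp {Y : Ω → ℂ} (hY : AEMeasurable Y P) (c : ℝ) (p : ENNReal) :
    MemLp (fun ω => truncBelow c (Y ω)) p P :=
  MemLp.of_bound ((measurable_truncBelow c).comp_aemeasurable hY).aestronglyMeasurable |c|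
    (Eventually.of_forall fun ω => norm_truncBelow_le c (Y ω))

lemma integral_norm_sub_integral_sq {E : Type*} [NormedAddCommGroup E] [InnerProductSpace ℝ E]
    [CompleteSpace E] {Y : Ω → E} (hY : MemLp Y 2 P) :
    ∫ ω, ‖Y ω - ∫ ω', Y ω' ∂P‖ ^ 2 ∂P = ∫ ω, ‖Y ω‖ ^ 2 ∂P - ‖∫ ω, Y ω ∂P‖ ^ 2 := by
  set a := ∫ ω, Y ω ∂P
  have hY1 : Integrable Y P := hY.integrable one_le_two
  have hY2 : Integrable (fun ω => ‖Y ω‖ ^ 2) P := hY.integrable_norm_pow two_ne_zero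
  have hinner : Integrable (fun ω => 2 * inner ℝ (Y ω) a) P := (hY1.inner_const a).const_mul 2
  have hmean : ∫ ω, inner ℝ (Y ω) a ∂P = ‖a‖ ^ 2 := by
    simp_rw [real_inner_comm a]
    exact (integral_inner hY1 a).trans (real_inner_self_eq_norm_sq a)
  simp_rw [norm_sub_sq_real]
  rw [integral_add (f := fun ω => ‖Y ω‖ ^ 2 - 2 * inner ℝ (Y ω) a) (hY2.sub hinner)
      (integrable_const _), integral_sub hY2 hinner, integral_const_mul, hmean]
  simp only [integral_const, probReal_univ, one_smul]
  ring

lemma integral_truncAbove_eq_neg {Y : Ω → ℂ} (hY : Integrable Y P) (h0 : ∫ ω, Y ω ∂P = 0)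
    (c : ℝ) : ∫ ω, truncAbove c (Y ω) ∂P = -∫ ω, truncBelow c (Y ω) ∂P := by
  have ha := ((memLp_one_iff_integrable.2 hY).truncAbove_comp c).integrable le_rfl
  have hb := (memLp_truncBelow_comp hY.aemeasurable c 1).integrable le_rfl
  rw [eq_neg_iff_add_eq_zero, ← integral_add ha hb, ← h0]
  simp_rw [add_comm (truncAbove c _), truncBelow_add_truncAbove]

lemma cVar_truncAbove_eq {Y : Ω → ℂ} (hY : Integrable Y P) (h0 : ∫ ω, Y ω ∂P = 0) (c : ℝ) :
    cVar P (fun ω => truncAbove c (Y ω)) =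
      ∫ ω, ‖truncAbove c (Y ω) + ∫ ω', truncBelow c (Y ω') ∂P‖ ^ 2 ∂P := by
  simp_rw [cVar, integral_truncAbove_eq_neg hY h0, sub_neg_eq_add]

lemma cVar_truncAbove_add_sigma2_le {Y : Ω → ℂ} (hY : MemLp Y 2 P) (h0 : ∫ ω, Y ω ∂P = 0)
    (c : ℝ) : cVar P (fun ω => truncAbove c (Y ω)) + sigma2 P Y c ≤ ∫ ω, ‖Y ω‖ ^ 2 ∂P := by
  have ha := hY.truncAbove_comp c
  have hb := memLp_truncBelow_comp hY.1.aemeasurable c 2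
  have hsplit : ∫ ω, ‖Y ω‖ ^ 2 ∂P
      = ∫ ω, ‖truncBelow c (Y ω)‖ ^ 2 ∂P + ∫ ω, ‖truncAbove c (Y ω)‖ ^ 2 ∂P := by
    rw [← integral_add (hb.integrable_norm_pow two_ne_zero) (ha.integrable_norm_pow two_ne_zero)]
    simp_rw [norm_truncBelow_sq_add_norm_truncAbove_sq]
  rw [sigma2, cVar, cVar, integral_norm_sub_integral_sq ha, integral_norm_sub_integral_sq hb,
    integral_truncAbove_eq_neg (hY.integrable one_le_two) h0, norm_neg, hsplit]
  nlinarith [norm_nonneg (∫ ω, truncBelow c (Y ω) ∂P)]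

end Variance

section UpperTriangle

lemma choose_two_succ (n : ℕ) : (n + 1).choose 2 = n.choose 2 + n := by
  rw [Nat.choose_succ_succ', Nat.choose_one_right, add_comm]

lemma bijective_choose_two_add :
    Function.Bijective fun p : {p : ℕ × ℕ // p.1 < p.2} => p.1.2.choose 2 + p.1.1 := by
  constructor
  · have hlt : ∀ {i j k l : ℕ}, i < j → j < l → j.choose 2 + i < l.choose 2 + k := by
      intro i j k l hij hjl
      have := Nat.choose_le_choose 2 (Nat.succ_le_of_lt hjl)
      rw [choose_two_succ] at this
      omega
    rintro ⟨⟨i, j⟩, hij⟩ ⟨⟨k, l⟩, hkl⟩ h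
    dsimp only at h hij hkl
    obtain rfl : j = l := by
      rcases lt_trichotomy j l with hjl | rfl | hlj
      · exact absurd h (hlt hij hjl).ne
      · rfl
      · exact absurd h (hlt hkl hlj).ne'
    obtain rfl : i = k := by omega
    rfl
  · intro k
    induction k with
    | zero => exact ⟨⟨(0, 1), one_pos⟩, rfl⟩
    | succ k ih =>
      obtain ⟨⟨⟨i, j⟩, hij⟩, rfl⟩ := ih
      by_cases h : i + 1 < j
      · exact ⟨⟨(i + 1, j), h⟩, rfl⟩
      · refine ⟨⟨(0, j + 1), j.succ_pos⟩, ?_⟩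
        dsimp only at hij ⊢
        rw [choose_two_succ]
        omega

noncomputable def upperPairEquiv : ℕ ≃ {p : ℕ × ℕ // p.1 < p.2} :=
  (Equiv.ofBijective _ bijective_choose_two_add).symm

lemma upperPairEquiv_choose_two_add {i j : ℕ} (h : i < j) :
    upperPairEquiv (j.choose 2 + i) = ⟨(i, j), h⟩ :=
  (Equiv.ofBijective _ bijective_choose_two_add).symm_apply_apply ⟨(i, j), h⟩

lemma sum_range_choose_two {M : Type*} [AddCommMonoid M] (f : ℕ → M) (n : ℕ) :
    ∑ k ∈ range (n.choose 2), f k = ∑ j ∈ range n, ∑ i ∈ range j, f (j.choose 2 + i) := by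
  induction n with
  | zero => simp
  | succ n ih => rw [choose_two_succ, sum_range_add, ih, sum_range_succ]

lemma tendsto_choose_two_atTop : Tendsto (fun n : ℕ => n.choose 2) atTop atTop :=
  tendsto_atTop_atTop.2 fun b => ⟨b + 1, fun _ hn =>
    (Nat.le_add_left b _).trans ((choose_two_succ b).symm ▸ Nat.choose_le_choose 2 hn)⟩

theorem strong_law_ae_upperTriangle {Ω : Type*} [MeasurableSpace Ω] {μ : Measure Ω}
    {E : Type*} [NormedAddCommGroup E] [NormedSpace ℝ E] [CompleteSpace E] [MeasurableSpace E]
    [BorelSpace E] (Y : ℕ → ℕ → Ω → E) (hint : Integrable (Y 0 1) μ)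
    (hindep : Pairwise fun p q : {p : ℕ × ℕ // p.1 < p.2} =>
      IndepFun (Y p.1.1 p.1.2) (Y q.1.1 q.1.2) μ)
    (hident : ∀ i j, i < j → IdentDistrib (Y i j) (Y 0 1) μ μ) :
    ∀ᵐ ω ∂μ, Tendsto (fun n : ℕ => ((n.choose 2 : ℕ) : ℝ)⁻¹ •
      ∑ j ∈ range n, ∑ i ∈ range j, Y i j ω) atTop (𝓝 μ[Y 0 1]) := by
  set Z : ℕ → Ω → E := fun k => Y (upperPairEquiv k).1.1 (upperPairEquiv k).1.2
  have hZ : ∀ i j (h : i < j), Z (j.choose 2 + i) = Y i j := fun i j h => by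
    simp only [Z, upperPairEquiv_choose_two_add h]
  have hZ0 : Z 0 = Y 0 1 := hZ 0 1 one_pos
  have hlaw := strong_law_ae Z (hZ0 ▸ hint)
    (fun k l hkl => hindep (upperPairEquiv.injective.ne hkl))
    (fun k => hZ0 ▸ hident _ _ (upperPairEquiv k).2)
  filter_upwards [hlaw] with ω hω
  rw [hZ0] at hω
  refine (hω.comp tendsto_choose_two_atTop).congr fun n => ?_
  simp only [Function.comp_apply, sum_range_choose_two]
  congr 1
  exact sum_congr rfl fun j _ => sum_congr rfl fun i hi => by rw [hZ i j (mem_range.1 hi)]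

lemma tendsto_two_mul_inv_mul_inv_mul_choose_two :
    Tendsto (fun n : ℕ => 2 * (n : ℝ)⁻¹ * (n : ℝ)⁻¹ * (n.choose 2 : ℕ)) atTop (𝓝 1) := by
  have h : Tendsto (fun n : ℕ => 1 - (n : ℝ)⁻¹) atTop (𝓝 1) := by
    simpa using (tendsto_const_nhds (x := (1 : ℝ))).sub tendsto_inv_atTop_nhds_zero_nat
  refine h.congr' ?_
  filter_upwards [eventually_ge_atTop 1] with n hn
  rw [Nat.cast_choose_two]
  field_simp

end UpperTriangle

namespace IsWignerEntries

variable {Ω : Type*} [MeasurableSpace Ω] {P : Measure Ω} {L : Type*} {X : L → ℕ → ℕ → Ω → ℂ}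

lemma identDistrib_offdiag (hX : IsWignerEntries P X) (l : L) {i j : ℕ} (h : i < j) :
    IdentDistrib (X l i j) (X l 0 1) P P :=
  ⟨(hX.meas l i j).aemeasurable, (hX.meas l 0 1).aemeasurable, hX.offdiag_distrib l i j h⟩

lemma identDistrib_diag (hX : IsWignerEntries P X) (l : L) (i : ℕ) :
    IdentDistrib (X l i i) (X l 0 0) P P :=
  ⟨(hX.meas l i i).aemeasurable, (hX.meas l 0 0).aemeasurable, hX.diag_distrib l i⟩

lemma indepFun_entry (hX : IsWignerEntries P X) (l : L) {i j k m : ℕ} (hij : i ≤ j)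
    (hkm : k ≤ m) (hne : (i, j) ≠ (k, m)) : IndepFun (X l i j) (X l k m) P :=
  hX.indep.indepFun (i := (l, ⟨(i, j), hij⟩)) (j := (l, ⟨(k, m), hkm⟩))
    (by simpa [Subtype.ext_iff] using hne)

theorem ae_tendsto_diag_zero (hX : IsWignerEntries P X) (l : L)
    (h2 : Integrable (fun ω => ‖X l 0 0 ω‖ ^ 2) P) :
    ∀ᵐ ω ∂P, Tendsto (fun n : ℕ => (n : ℝ)⁻¹ * ((n : ℝ)⁻¹ * ∑ i ∈ range n, ‖X l i i ω‖ ^ 2))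
      atTop (𝓝 0) := by
  have hsq : Measurable fun z : ℂ => ‖z‖ ^ 2 := by fun_prop
  have hlaw := strong_law_ae (fun i ω => ‖X l i i ω‖ ^ 2) h2
    (fun i k hik => (hX.indepFun_entry l le_rfl le_rfl (by simpa using hik)).comp hsq hsq)
    (fun i => (hX.identDistrib_diag l i).comp hsq)
  filter_upwards [hlaw] with ω hω
  simpa using tendsto_inv_atTop_nhds_zero_nat.mul hω

theorem strong_law_ae_upper (hX : IsWignerEntries P X) (l : L) {g : ℂ → ℝ}
    (hg : Measurable g) (hint : Integrable (fun ω => g (X l 0 1 ω)) P) :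
    ∀ᵐ ω ∂P, Tendsto (fun n : ℕ => 2 * (n : ℝ)⁻¹ * (n : ℝ)⁻¹ *
      ∑ j ∈ range n, ∑ i ∈ range j, g (X l i j ω)) atTop (𝓝 (∫ ω, g (X l 0 1 ω) ∂P)) := by
  have hlaw := strong_law_ae_upperTriangle (fun i j ω => g (X l i j ω)) hint
    (fun p q hpq => (hX.indepFun_entry l p.2.le q.2.le fun h => hpq (Subtype.ext h)).comp hg hg)
    (fun i j h => (hX.identDistrib_offdiag l h).comp hg)
  filter_upwards [hlaw] with ω hω
  have hlim := tendsto_two_mul_inv_mul_inv_mul_choose_two.mul hω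
  rw [one_mul] at hlim
  refine hlim.congr' ?_
  filter_upwards [eventually_ge_atTop 2] with n hn
  have hC : ((n.choose 2 : ℕ) : ℝ) ≠ 0 := by positivity [Nat.choose_pos hn]
  rw [smul_eq_mul, mul_assoc _ (n.choose 2 : ℝ), mul_inv_cancel_left₀ hC]

end IsWignerEntries

section Schatten

attribute [local instance] Matrix.frobeniusNormedAddCommGroup Matrix.frobeniusNormedSpace

lemma schatten2_eq_sqrt_mul_frobenius_norm {n : ℕ} (M : Matrix (Fin n) (Fin n) ℂ) :
    schatten2 M = Real.sqrt (n : ℝ)⁻¹ * ‖M‖ := by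
  rw [schatten2, Matrix.frobenius_norm_def, ← Real.sqrt_eq_rpow, ← Real.sqrt_mul (by positivity)]
  simp_rw [Real.rpow_two]

lemma schatten2_add_le {n : ℕ} (M N : Matrix (Fin n) (Fin n) ℂ) :
    schatten2 (M + N) ≤ schatten2 M + schatten2 N := by
  simp only [schatten2_eq_sqrt_mul_frobenius_norm, ← mul_add]
  gcongr
  exact norm_add_le M N

lemma schatten2_smul {n : ℕ} (a : ℂ) (M : Matrix (Fin n) (Fin n) ℂ) :
    schatten2 (a • M) = ‖a‖ * schatten2 M := by
  rw [schatten2_eq_sqrt_mul_frobenius_norm, schatten2_eq_sqrt_mul_frobenius_norm, norm_smul,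
    mul_left_comm]

lemma limsup_schatten2_add_smul_le {M N : ∀ n : ℕ, Matrix (Fin n) (Fin n) ℂ} {x y : ℝ} (a : ℂ)
    (hM : Tendsto (fun n => schatten2 (M n)) atTop (𝓝 x))
    (hN : Tendsto (fun n => schatten2 (N n)) atTop (𝓝 y)) :
    limsup (fun n => schatten2 (M n + a • N n)) atTop ≤ x + ‖a‖ * y := by
  have hlim := hM.add (hN.const_mul ‖a‖)
  rw [← hlim.limsup_eq]
  refine limsup_le_limsup (Eventually.of_forall fun n => ?_) ?_ hlim.isBoundedUnder_le
  · exact (schatten2_add_le _ _).trans_eq (by rw [schatten2_smul])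
  · exact isBoundedUnder_of ⟨0, fun n => Real.sqrt_nonneg _⟩ |>.isCoboundedUnder_le

noncomputable def scaledMat (f : ℕ → ℕ → ℂ) (n : ℕ) : Matrix (Fin n) (Fin n) ℂ :=
  Matrix.of fun i j => (Real.sqrt n : ℂ)⁻¹ * f i j

lemma sum_range_sum_range_eq_diag_add_upper {M : Type*} [AddCommMonoid M] (F : ℕ → ℕ → M)
    (n : ℕ) : ∑ i ∈ range n, ∑ j ∈ range n, F i j
      = ∑ i ∈ range n, F i i + ∑ j ∈ range n, ∑ i ∈ range j, (F i j + F j i) := by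
  induction n with
  | zero => simp
  | succ n ih =>
    simp only [sum_range_succ, sum_add_distrib, ih]
    abel

lemma norm_inv_sqrt_mul_sq (n : ℕ) (z : ℂ) :
    ‖(Real.sqrt n : ℂ)⁻¹ * z‖ ^ 2 = (n : ℝ)⁻¹ * ‖z‖ ^ 2 := by
  rw [norm_mul, norm_inv, Complex.norm_real, Real.norm_of_nonneg (Real.sqrt_nonneg _), mul_pow,
    inv_pow, Real.sq_sqrt n.cast_nonneg]

lemma schatten2_scaledMat {f : ℕ → ℕ → ℂ} (hf : ∀ i j, ‖f j i‖ = ‖f i j‖) (n : ℕ) :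
    schatten2 (scaledMat f n) =
      Real.sqrt ((n : ℝ)⁻¹ * ((n : ℝ)⁻¹ * ∑ i ∈ range n, ‖f i i‖ ^ 2) +
        2 * (n : ℝ)⁻¹ * (n : ℝ)⁻¹ * ∑ j ∈ range n, ∑ i ∈ range j, ‖f i j‖ ^ 2) := by
  rw [schatten2]
  congr 1
  simp only [scaledMat, Matrix.of_apply, norm_inv_sqrt_mul_sq, ← mul_sum]
  rw [Fin.sum_univ_eq_sum_range (fun i => ∑ j : Fin n, ‖f i j‖ ^ 2),
    sum_congr rfl fun i _ => Fin.sum_univ_eq_sum_range (fun j => ‖f i j‖ ^ 2) n,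
    sum_range_sum_range_eq_diag_add_upper]
  simp only [hf, ← two_mul, ← mul_sum]
  ring

lemma tendsto_schatten2_scaledMat {f : ℕ → ℕ → ℂ} (hf : ∀ i j, ‖f j i‖ = ‖f i j‖)
    {g : ℕ → ℕ → ℝ} (hfg : ∀ i j, i < j → ‖f i j‖ ^ 2 = g i j) {v : ℝ}
    (hdiag : Tendsto (fun n : ℕ => (n : ℝ)⁻¹ * ((n : ℝ)⁻¹ * ∑ i ∈ range n, ‖f i i‖ ^ 2))
      atTop (𝓝 0))
    (hupper : Tendsto (fun n : ℕ => 2 * (n : ℝ)⁻¹ * (n : ℝ)⁻¹ *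
      ∑ j ∈ range n, ∑ i ∈ range j, g i j) atTop (𝓝 v)) :
    Tendsto (fun n => schatten2 (scaledMat f n)) atTop (𝓝 (Real.sqrt v)) := by
  have hsum : ∀ n, ∑ j ∈ range n, ∑ i ∈ range j, ‖f i j‖ ^ 2
      = ∑ j ∈ range n, ∑ i ∈ range j, g i j := fun n =>
    sum_congr rfl fun j _ => sum_congr rfl fun i hi => hfg i j (mem_range.1 hi)
  simp only [schatten2_scaledMat hf, hsum]
  simpa using (hdiag.add hupper).sqrt

end Schatten

-- The inequality is strict only at `σ = 0`, where the junk value `0⁻¹ = 0` makes the left side `0`.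
lemma norm_one_sub_inv_mul_le {σ : ℝ} (hσ : 0 ≤ σ) : ‖1 - (σ : ℂ)⁻¹‖ * σ ≤ |1 - σ| := by
  rcases hσ.eq_or_lt with rfl | hσ
  · simp
  refine le_of_eq ?_
  calc ‖1 - (σ : ℂ)⁻¹‖ * σ = ‖(1 - (σ : ℂ)⁻¹) * σ‖ := by
        rw [norm_mul, Complex.norm_of_nonneg hσ.le]
    _ = |1 - σ| := by
        rw [sub_mul, inv_mul_cancel₀ (by exact_mod_cast hσ.ne'), one_mul, ← Complex.ofReal_one,
          ← Complex.ofReal_sub, Complex.norm_real, Real.norm_eq_abs, abs_sub_comm]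

section CenteredTruncation

variable {Ω : Type*} [MeasurableSpace Ω] (P : Measure Ω) (X : ℕ → ℕ → Ω → ℂ) (c : ℝ) (ω : Ω)

noncomputable def centeredTruncArray : ℕ → ℕ → ℂ := fun i j =>
  if i = j then 0 else truncBelow c (X i j ω) - ∫ ω', truncBelow c (X i j ω') ∂P

lemma wignerMat_sub_truncMat (n : ℕ) :
    wignerMat (fun _ : Fin 1 => X) 0 n ω - truncMat P X c n ω =
      scaledMat (fun i j => X i j ω - centeredTruncArray P X c ω i j) n +
        (1 - (Real.sqrt (sigma2 P (X 0 1) c) : ℂ)⁻¹) •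
          scaledMat (centeredTruncArray P X c ω) n := by
  ext i j
  simp only [wignerMat, truncMat, scaledMat, centeredTruncArray, Fin.val_inj, Matrix.sub_apply,
    Matrix.add_apply, Matrix.smul_apply, Matrix.of_apply, smul_eq_mul]
  split_ifs <;> ring

variable {X}

lemma centeredTruncArray_swap (hX : ∀ i j ω, X j i ω = starRingEnd ℂ (X i j ω)) (i j : ℕ) :
    centeredTruncArray P X c ω j i = starRingEnd ℂ (centeredTruncArray P X c ω i j) := by
  simp only [centeredTruncArray, hX i j, truncBelow_conj, integral_conj, eq_comm (a := j)]
  split_ifs <;> simp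

variable {P c}

lemma limsup_schatten2_wignerMat_sub_truncMat_le {m : ℂ} {v : ℝ}
    (hX : ∀ i j ω, X j i ω = starRingEnd ℂ (X i j ω))
    (hm : ∀ i j, i < j → ∫ ω, truncBelow c (X i j ω) ∂P = m)
    (hdiag : Tendsto (fun n : ℕ => (n : ℝ)⁻¹ * ((n : ℝ)⁻¹ * ∑ i ∈ range n, ‖X i i ω‖ ^ 2))
      atTop (𝓝 0))
    (habove : Tendsto (fun n : ℕ => 2 * (n : ℝ)⁻¹ * (n : ℝ)⁻¹ *
      ∑ j ∈ range n, ∑ i ∈ range j, ‖truncAbove c (X i j ω) + m‖ ^ 2) atTop (𝓝 v))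
    (hbelow : Tendsto (fun n : ℕ => 2 * (n : ℝ)⁻¹ * (n : ℝ)⁻¹ *
      ∑ j ∈ range n, ∑ i ∈ range j, ‖truncBelow c (X i j ω) - m‖ ^ 2) atTop
        (𝓝 (sigma2 P (X 0 1) c))) :
    limsup (fun n => schatten2 (wignerMat (fun _ : Fin 1 => X) 0 n ω - truncMat P X c n ω))
      atTop ≤ Real.sqrt v + |1 - Real.sqrt (sigma2 P (X 0 1) c)| := by
  have hswap := centeredTruncArray_swap P c ω hX
  have hR := tendsto_schatten2_scaledMat (f := fun i j => X i j ω - centeredTruncArray P X c ω i j)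
    (fun i j => by rw [hX i j ω, hswap i j, ← map_sub, RCLike.norm_conj])
    (fun i j h => by
      rw [centeredTruncArray, if_neg h.ne, hm i j h]
      congr 2
      linear_combination (-1 : ℂ) * truncBelow_add_truncAbove c (X i j ω))
    (by simpa [centeredTruncArray] using hdiag) habove
  have hV := tendsto_schatten2_scaledMat (f := centeredTruncArray P X c ω)
    (fun i j => by rw [hswap i j, RCLike.norm_conj])
    (fun i j h => by rw [centeredTruncArray, if_neg h.ne, hm i j h])
    (by simp [centeredTruncArray]) hbelow
  simp_rw [wignerMat_sub_truncMat]
  exact (limsup_schatten2_add_smul_le _ hR hV).trans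
    (add_le_add_right (norm_one_sub_inv_mul_le (Real.sqrt_nonneg _)) _)

end CenteredTruncation

theorem statement15_general {Ω : Type*} [MeasurableSpace Ω] (P : Measure Ω) [IsProbabilityMeasure P]
    (X : ℕ → ℕ → Ω → ℂ) (hX : IsWignerEntries P (fun _ : Fin 1 => X))
    (h4 : Integrable (fun ω => ‖X 0 1 ω‖ ^ 4) P)
    (h2 : Integrable (fun ω => ‖X 0 0 ω‖ ^ 2) P)
    (c : ℝ) :
    (∀ᵐ ω ∂P,
      Filter.limsup
          (fun n => schatten2 (wignerMat (fun _ : Fin 1 => X) 0 n ω - truncMat P X c n ω))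
          Filter.atTop ≤
        Real.sqrt (cVar P fun ω => truncAbove c (X 0 1 ω)) +
          |1 - Real.sqrt (sigma2 P (X 0 1) c)|) ∧
    Real.sqrt (cVar P fun ω => truncAbove c (X 0 1 ω)) +
        |1 - Real.sqrt (sigma2 P (X 0 1) c)| ≤
      Real.sqrt (1 - sigma2 P (X 0 1) c) + |1 - Real.sqrt (sigma2 P (X 0 1) c)| := by
  have hmeas := (hX.meas 0 0 1).aestronglyMeasurable (μ := P)
  have hY : MemLp (X 0 1) 2 P := (memLp_two_iff_integrable_sq_norm hmeas).2
    (integrable_norm_pow_of_le hmeas (by norm_num) h4)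
  have hvar := cVar_truncAbove_add_sigma2_le hY (hX.mean_zero 0) c
  rw [hX.var_one 0] at hvar
  refine ⟨?_, by gcongr; linarith⟩
  set m := ∫ ω, truncBelow c (X 0 1 ω) ∂P
  have hm : ∀ i j, i < j → ∫ ω, truncBelow c (X i j ω) ∂P = m := fun i j h =>
    ((hX.identDistrib_offdiag 0 h).comp (measurable_truncBelow c)).integral_eq
  filter_upwards [hX.ae_tendsto_diag_zero 0 h2,
    hX.strong_law_ae_upper 0 (g := fun z => ‖truncAbove c z + m‖ ^ 2) (by fun_prop)
      (((hY.truncAbove_comp c).add (memLp_const m)).integrable_norm_pow two_ne_zero),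
    hX.strong_law_ae_upper 0 (g := fun z => ‖truncBelow c z - m‖ ^ 2) (by fun_prop)
      (((memLp_truncBelow_comp hmeas.aemeasurable c 2).sub (memLp_const m)).integrable_norm_pow
        two_ne_zero)] with ω hdiag habove hbelow
  rw [← cVar_truncAbove_eq (hY.integrable one_le_two) (hX.mean_zero 0)] at habove
  exact limsup_schatten2_wignerMat_sub_truncMat_le ω (hX.herm 0) hm hdiag habove hbelow

/-- Almost surely,
`limsup_n ‖A_n − Ã_n‖₂ ≤ √(Var(X₁₂·𝟙_{|X₁₂|>c})) + |1 − σ(c)| ≤ √(1 − σ²(c)) + |1 − σ(c)|`. -/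
theorem statement15 {Ω : Type*} [MeasurableSpace Ω] (P : Measure Ω) [IsProbabilityMeasure P]
    (X : ℕ → ℕ → Ω → ℂ) (hX : IsWignerEntries P (fun _ : Fin 1 => X))
    (h4 : Integrable (fun ω => ‖X 0 1 ω‖ ^ 4) P)
    (h2 : Integrable (fun ω => ‖X 0 0 ω‖ ^ 2) P)
    (c : ℝ) (hc : 0 < c) (hσ : 0 < sigma2 P (X 0 1) c) :
    (∀ᵐ ω ∂P,
      Filter.limsup
          (fun n => schatten2 (wignerMat (fun _ : Fin 1 => X) 0 n ω - truncMat P X c n ω))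
          Filter.atTop ≤
        Real.sqrt (cVar P fun ω => truncAbove c (X 0 1 ω)) +
          |1 - Real.sqrt (sigma2 P (X 0 1) c)|) ∧
    Real.sqrt (cVar P fun ω => truncAbove c (X 0 1 ω)) +
        |1 - Real.sqrt (sigma2 P (X 0 1) c)| ≤
      Real.sqrt (1 - sigma2 P (X 0 1) c) + |1 - Real.sqrt (sigma2 P (X 0 1) c)| :=
  statement15_general P X hX h4 h2 c
end
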